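/- arXiv:math/0609483 — 2 statements merged into one kernel-verified Lean document; each statement's English description precedes it below -/
import Mathlib

section
/- The number of connected components of the fibered product Ξ_{\vec{s}} = {(μ_1,…,μ_l;λ) ∈ ℂ^{l+1} : μ_j^{s_j} = λ for j = 1,…,l}, for positive integers s_1,…,s_l, equals the number of orbits of the group (ℤ/s_1ℤ) ⊕ ⋯ ⊕ (ℤ/s_lℤ) under the action generated by the diagonal translation (e_1,…,e_l) ↦ (e_1+1,…,e_l+1). More precisely, two points of Ξ_{\vec{s}} with λ ≠ 0 lie in the same connected component iff the tuples of choices of s_j-th roots differ by this diagonal action, so topologically Ξ_{\vec{s}} is a wedge of n copies of ℂ glued at the origin, where n is that orbit count. -/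
/-!
Put `N = lcm s_j`. For a tuple `e ∈ ∏ ZMod s_j`, the branch
`t ↦ (exp (2πi e_j / s_j) · t ^ (N / s_j); t ^ N)` is a proper map `ℂ → Ξ`, and these branches
cover `Ξ`. Replacing `t` by `exp (2πi m / N) · t` translates `e` diagonally by `m`, and away from
`t = 0` this is the only way two branches meet. Choosing one tuple per diagonal orbit therefore
gives a proper continuous surjection from `(orbits) × ℂ` onto `Ξ` that only collapses the zero
section, i.e. a homeomorphism from the wedge. Away from the origin the chosen branches have
finitely many disjoint, closed, connected images covering `Ξ \ {0}`, so these images are its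
connected components.
-/

/-- The number of orbits of the diagonal translation action of `ℤ` on `∏ j, ZMod (s j)`. -/
noncomputable def diagOrbitCount (l : ℕ) (s : Fin l → ℕ) : ℕ :=
  Nat.card (Quot (fun e₁ e₂ : ∀ j : Fin l, ZMod (s j) =>
    ∃ m : ℤ, ∀ j, e₂ j = e₁ j + (m : ZMod (s j))))

open Complex Function Set ZMod

theorem ZMod.exists_toCircle_eq_of_pow_eq_one {N : ℕ} [NeZero N] {z : ℂ} (hz : z ^ N = 1) :
    ∃ a : ZMod N, (toCircle a : ℂ) = z := by
  obtain ⟨k, -, hk⟩ := (isPrimitiveRoot_exp N (NeZero.ne N)).eq_pow_of_pow_eq_one hz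
  refine ⟨k, ?_⟩
  rw [toCircle_natCast, ← hk, ← exp_nat_mul]
  ring_nf

theorem ZMod.toCircle_intCast_pow_div {N s : ℕ} [NeZero N] [NeZero s] (h : s ∣ N) (m : ℤ) :
    (toCircle (m : ZMod N) : ℂ) ^ (N / s) = toCircle (m : ZMod s) := by
  rw [toCircle_intCast, toCircle_intCast, ← exp_nat_mul, Nat.cast_div h (NeZero.ne _)]
  have : (N : ℂ) ≠ 0 := by exact_mod_cast NeZero.ne N
  field_simp

theorem ZMod.toCircle_pow_self {N : ℕ} [NeZero N] (a : ZMod N) : (toCircle a : ℂ) ^ N = 1 := by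
  rw [← Circle.coe_pow, ← AddChar.map_nsmul_eq_pow, nsmul_eq_mul, ZMod.natCast_self, zero_mul,
    AddChar.map_zero_eq_one, Circle.coe_one]

theorem ZMod.exists_toCircle_mul_eq_of_pow_eq_pow {N : ℕ} [NeZero N] {t t' : ℂ} (ht : t ≠ 0)
    (h : t ^ N = t' ^ N) : ∃ m : ℤ, t' = toCircle (m : ZMod N) * t := by
  have hpow : (t' / t) ^ N = 1 := by rw [div_pow, ← h, div_self (pow_ne_zero _ ht)]
  obtain ⟨a, ha⟩ := exists_toCircle_eq_of_pow_eq_one hpow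
  exact ⟨a.cast, by rw [intCast_zmod_cast, ha, div_mul_cancel₀ _ ht]⟩

theorem isProperMap_pow {𝕜 : Type*} [NormedField 𝕜] [ProperSpace 𝕜] {N : ℕ} (hN : N ≠ 0) :
    IsProperMap (fun t : 𝕜 => t ^ N) := by
  simpa using (Polynomial.X ^ N : Polynomial 𝕜).isProperMap_eval (by simp [Nat.pos_of_ne_zero hN])

theorem nonempty_homeomorph_quot_of_isClosedMap {X Y : Type*} [TopologicalSpace X]
    [TopologicalSpace Y] {f : X → Y} (hf : Continuous f) (hcl : IsClosedMap f)
    (hsurj : Surjective f) {R : X → X → Prop} (hR : ∀ p q, R p q ↔ f p = f q) :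
    Nonempty (Y ≃ₜ Quot R) := by
  obtain rfl : R = (Setoid.ker f).r := by ext p q; exact hR p q
  exact ⟨(Topology.IsQuotientMap.homeomorph (f := ⟨f, hf⟩)
    (hcl.isQuotientMap hf hsurj)).symm⟩

section FinitePartition

variable {X O : Type*} [TopologicalSpace X] [Finite O] {B : O → Set X}

theorem connectedComponent_eq_of_finite_partition (hclosed : ∀ o, IsClosed (B o))
    (hconn : ∀ o, IsPreconnected (B o)) (hcover : ∀ x, ∃! o, x ∈ B o) {x : X} {o : O}
    (hx : x ∈ B o) : connectedComponent x = B o := by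
  have hcompl : (B o)ᶜ = ⋃ o' ∈ ({o}ᶜ : Set O), B o' := by
    ext y
    simp only [mem_compl_iff, mem_iUnion, mem_singleton_iff, exists_prop]
    obtain ⟨o', hy, huniq⟩ := hcover y
    exact ⟨fun hyo => ⟨o', fun h => hyo (h ▸ hy), hy⟩,
      fun ⟨o'', hne, hy''⟩ hyo => hne ((huniq o'' hy'').trans (huniq o hyo).symm)⟩
  have hopen : IsOpen (B o) := by
    rw [← isClosed_compl_iff, hcompl]
    exact (toFinite _).isClosed_biUnion fun o' _ => hclosed o'
  exact ((IsClopen.connectedComponent_subset ⟨hclosed o, hopen⟩ hx)).antisymm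
    ((hconn o).subset_connectedComponent hx)

theorem ConnectedComponents.mk_eq_mk_iff_of_finite_partition (hclosed : ∀ o, IsClosed (B o))
    (hconn : ∀ o, IsPreconnected (B o)) (hcover : ∀ x, ∃! o, x ∈ B o) {x y : X} :
    mk x = mk y ↔ ∃ o, x ∈ B o ∧ y ∈ B o := by
  obtain ⟨o, hy, huniq⟩ := hcover y
  rw [coe_eq_coe', connectedComponent_eq_of_finite_partition hclosed hconn hcover hy]
  exact ⟨fun hx => ⟨o, hx, hy⟩, fun ⟨o', hx', hy'⟩ => huniq o' hy' ▸ hx'⟩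

theorem natCard_connectedComponents_of_finite_partition (hclosed : ∀ o, IsClosed (B o))
    (hconn : ∀ o, IsConnected (B o)) (hcover : ∀ x, ∃! o, x ∈ B o) :
    Nat.card (ConnectedComponents X) = Nat.card O := by
  have hmk := fun x y => ConnectedComponents.mk_eq_mk_iff_of_finite_partition hclosed
    (fun o => (hconn o).isPreconnected) hcover (x := x) (y := y)
  choose pt hpt using fun o => (hconn o).nonempty
  refine (Nat.card_eq_of_bijective (fun o => ConnectedComponents.mk (pt o)) ⟨?_, ?_⟩).symm
  · intro o o' h
    obtain ⟨o'', h1, h2⟩ := (hmk _ _).mp h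
    exact ((hcover _).unique (hpt o) h1).trans ((hcover _).unique h2 (hpt o'))
  · refine ConnectedComponents.surjective_coe.forall.mpr fun x => ?_
    obtain ⟨o, hx, -⟩ := hcover x
    exact ⟨o, (hmk _ _).mpr ⟨o, hpt o, hx⟩⟩

end FinitePartition

namespace RootFiberProduct

variable {ι : Type*} [Fintype ι] (s : ι → ℕ)

def rootVariety : Set ((ι → ℂ) × ℂ) := {x | ∀ j, x.1 j ^ s j = x.2}

def puncturedRootVariety : Set ((ι → ℂ) × ℂ) := {x | x ∈ rootVariety s ∧ x.2 ≠ 0}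

def lcmDegree : ℕ := Finset.univ.lcm s

theorem dvd_lcmDegree (j : ι) : s j ∣ lcmDegree s := Finset.dvd_lcm (Finset.mem_univ j)

theorem intCast_lcmDegree_eq_zero {m : ℤ} (h : (m : ∀ j, ZMod (s j)) = 0) :
    (m : ZMod (lcmDegree s)) = 0 := by
  rw [ZMod.intCast_zmod_eq_zero_iff_dvd, Int.natCast_dvd]
  refine Finset.lcm_dvd fun j _ => Int.natCast_dvd.mp ?_
  rw [← ZMod.intCast_zmod_eq_zero_iff_dvd, ← Pi.intCast_apply (π := fun j => ZMod (s j)), h,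
    Pi.zero_apply]

variable [∀ j, NeZero (s j)]

instance : NeZero (lcmDegree s) :=
  ⟨by simp [lcmDegree, Finset.lcm_eq_zero_iff, NeZero.ne]⟩

noncomputable def branch (e : ∀ j, ZMod (s j)) (t : ℂ) : (ι → ℂ) × ℂ :=
  (fun j => toCircle (e j) * t ^ (lcmDegree s / s j), t ^ lcmDegree s)

variable {s}

theorem branch_mem (e : ∀ j, ZMod (s j)) (t : ℂ) : branch s e t ∈ rootVariety s := fun j => by
  rw [branch, mul_pow, ZMod.toCircle_pow_self, one_mul, ← pow_mul,
    Nat.div_mul_cancel (dvd_lcmDegree s j)]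

theorem branch_zero_right (e : ∀ j, ZMod (s j)) : branch s e 0 = 0 := by
  ext j
  · simp [branch, NeZero.ne, Nat.div_ne_zero_iff_of_dvd (dvd_lcmDegree s j)]
  · simp [branch, NeZero.ne]

theorem continuous_branch (e : ∀ j, ZMod (s j)) : Continuous (branch s e) := by
  unfold branch; fun_prop

theorem branch_add_intCast (e : ∀ j, ZMod (s j)) (m : ℤ) (t : ℂ) :
    branch s (e + m) t =
      (fun j => toCircle (m : ZMod (s j)) * (branch s e t).1 j, (branch s e t).2) := by
  ext j
  · simp only [branch, Pi.add_apply, Pi.intCast_apply, AddChar.map_add_eq_mul, Circle.coe_mul]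
    ring
  · rfl

theorem branch_toCircle_mul (e : ∀ j, ZMod (s j)) (m : ℤ) (t : ℂ) :
    branch s e (toCircle (m : ZMod (lcmDegree s)) * t) = branch s (e + m) t := by
  ext j
  · simp only [branch, mul_pow, ZMod.toCircle_intCast_pow_div (dvd_lcmDegree s j), Pi.add_apply,
      Pi.intCast_apply, AddChar.map_add_eq_mul, Circle.coe_mul]
    ring
  · simp only [branch, mul_pow, ZMod.toCircle_pow_self, one_mul]

theorem branch_left_injective {t : ℂ} (ht : t ≠ 0) : Injective (fun e => branch s e t) := by
  intro e e' h
  funext j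
  have hj : toCircle (e j) * t ^ (lcmDegree s / s j) =
      toCircle (e' j) * t ^ (lcmDegree s / s j) :=
    congrFun (congrArg Prod.fst h) j
  exact ZMod.injective_toCircle (Circle.coe_injective (mul_right_cancel₀ (pow_ne_zero _ ht) hj))

theorem exists_of_branch_eq_branch {e e' : ∀ j, ZMod (s j)} {t t' : ℂ} (ht : t ≠ 0)
    (h : branch s e t = branch s e' t') :
    ∃ m : ℤ, e = e' + m ∧ t' = toCircle (m : ZMod (lcmDegree s)) * t := by
  obtain ⟨m, rfl⟩ := ZMod.exists_toCircle_mul_eq_of_pow_eq_pow ht (congrArg Prod.snd h)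
  exact ⟨m, branch_left_injective ht (h.trans (branch_toCircle_mul e' m t)), rfl⟩

theorem exists_branch_eq {x : (ι → ℂ) × ℂ} (hx : x ∈ rootVariety s) :
    ∃ e t, branch s e t = x := by
  obtain ⟨t, ht⟩ := IsAlgClosed.exists_pow_nat_eq x.2 (Nat.pos_of_neZero (lcmDegree s))
  by_cases hx0 : x.2 = 0
  · refine ⟨0, 0, ?_⟩
    rw [branch_zero_right]
    ext j
    · exact ((pow_eq_zero_iff (NeZero.ne (s j))).mp ((hx j).trans hx0)).symm
    · exact hx0.symm
  · have ht0 : t ≠ 0 := by rintro rfl; exact hx0 (by simp [← ht, NeZero.ne])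
    have hroot : ∀ j, (x.1 j / t ^ (lcmDegree s / s j)) ^ s j = 1 := fun j => by
      rw [div_pow, hx j, ← pow_mul, Nat.div_mul_cancel (dvd_lcmDegree s j), ht, div_self hx0]
    choose e he using fun j => ZMod.exists_toCircle_eq_of_pow_eq_one (hroot j)
    refine ⟨e, t, Prod.ext (funext fun j => ?_) ht⟩
    simp only [branch, he, div_mul_cancel₀ _ (pow_ne_zero _ ht0)]

theorem ne_zero_of_branch_eq {e : ∀ j, ZMod (s j)} {t : ℂ} {x : (ι → ℂ) × ℂ} (hx : x.2 ≠ 0)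
    (h : branch s e t = x) : t ≠ 0 := by
  rintro rfl
  exact hx (by rw [← h, branch_zero_right, Prod.snd_zero])

theorem isProperMap_branch (e : ∀ j, ZMod (s j)) : IsProperMap (branch s e) :=
  isProperMap_of_comp_of_t2 (continuous_branch e) continuous_snd (isProperMap_pow (NeZero.ne _))

def sheet (e : ∀ j, ZMod (s j)) : Set (puncturedRootVariety s) :=
  {x | x.1 ∈ range (branch s e)}

theorem isClosed_sheet (e : ∀ j, ZMod (s j)) : IsClosed (sheet e) :=
  (isProperMap_branch e).isClosed_range.preimage continuous_subtype_val

theorem isConnected_sheet (e : ∀ j, ZMod (s j)) : IsConnected (sheet e) := by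
  have hmem : ∀ w : ℂ, branch s e (exp w) ∈ puncturedRootVariety s := fun w =>
    ⟨branch_mem e _, pow_ne_zero _ (exp_ne_zero w)⟩
  have hrange : sheet e =
      range (fun w => (⟨branch s e (exp w), hmem w⟩ : puncturedRootVariety s)) := by
    ext x
    constructor
    · rintro ⟨t, ht⟩
      have ht0 := ne_zero_of_branch_eq x.2.2 ht
      exact ⟨log t, Subtype.ext ((congrArg _ (exp_log ht0)).trans ht)⟩
    · rintro ⟨w, rfl⟩
      exact ⟨exp w, rfl⟩
  rw [hrange]
  exact isConnected_range ((continuous_branch e).comp continuous_exp |>.subtype_mk _)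

section Transversal

variable {O : Type*}

/-- For `m : ℤ`, `e + m` adds `m` to every coordinate of `e`, so `rep` meets every orbit of the
diagonal translation exactly once. -/
def IsDiagonalTransversal (rep : O → ∀ j, ZMod (s j)) : Prop :=
  ∀ e, ∃! o, ∃ m : ℤ, e = rep o + m

variable {rep : O → ∀ j, ZMod (s j)}

theorem exists_branch_rep_eq (hrep : IsDiagonalTransversal rep) {x : (ι → ℂ) × ℂ}
    (hx : x ∈ rootVariety s) : ∃ o t, branch s (rep o) t = x := by
  obtain ⟨e, t, rfl⟩ := exists_branch_eq hx
  obtain ⟨o, ⟨m, rfl⟩, -⟩ := hrep e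
  exact ⟨o, _, branch_toCircle_mul _ _ _⟩

theorem eq_of_branch_rep_eq (hrep : IsDiagonalTransversal rep) {o o' : O} {t t' : ℂ}
    (ht : t ≠ 0) (h : branch s (rep o) t = branch s (rep o') t') : o = o' ∧ t = t' := by
  obtain ⟨m, hm, rfl⟩ := exists_of_branch_eq_branch ht h
  obtain rfl : o = o' := (hrep (rep o)).unique ⟨0, by simp⟩ ⟨m, hm⟩
  have hm0 : (m : ZMod (lcmDegree s)) = 0 := intCast_lcmDegree_eq_zero s (left_eq_add.mp hm)
  simp [hm0]

theorem branch_rep_eq_branch_rep_iff (hrep : IsDiagonalTransversal rep) {p q : O × ℂ} :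
    branch s (rep p.1) p.2 = branch s (rep q.1) q.2 ↔ p = q ∨ (p.2 = 0 ∧ q.2 = 0) := by
  constructor
  · intro h
    by_cases hp : p.2 = 0
    · refine Or.inr ⟨hp, ?_⟩
      have hN : p.2 ^ lcmDegree s = q.2 ^ lcmDegree s := congrArg Prod.snd h
      rwa [hp, zero_pow (NeZero.ne _), eq_comm, pow_eq_zero_iff (NeZero.ne _)] at hN
    · obtain ⟨ho, ht⟩ := eq_of_branch_rep_eq hrep hp h
      exact Or.inl (Prod.ext ho ht)
  · rintro (rfl | ⟨hp, hq⟩)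
    · rfl
    · rw [hp, hq, branch_zero_right, branch_zero_right]

theorem isProperMap_branch_rep [TopologicalSpace O] [DiscreteTopology O] [Finite O] :
    IsProperMap (fun p : O × ℂ => branch s (rep p.1) p.2) :=
  isProperMap_of_comp_of_t2
    (continuous_prod_of_discrete_left.mpr fun o => continuous_branch (rep o)) continuous_snd
    ((isProperMap_pow (NeZero.ne (lcmDegree s))).comp isProperMap_snd_of_compactSpace)

theorem nonempty_homeomorph_wedge [TopologicalSpace O] [DiscreteTopology O] [Finite O]
    (hrep : IsDiagonalTransversal rep) :
    Nonempty (rootVariety s ≃ₜ Quot (fun p q : O × ℂ => p = q ∨ (p.2 = 0 ∧ q.2 = 0))) := by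
  let f : O × ℂ → rootVariety s := fun p => ⟨branch s (rep p.1) p.2, branch_mem _ _⟩
  have hf : IsProperMap f :=
    isProperMap_of_comp_of_inj (isProperMap_branch_rep.continuous.subtype_mk _)
      continuous_subtype_val isProperMap_branch_rep Subtype.val_injective
  refine nonempty_homeomorph_quot_of_isClosedMap hf.continuous hf.isClosedMap ?_ fun p q => ?_
  · rintro ⟨x, hx⟩
    obtain ⟨o, t, h⟩ := exists_branch_rep_eq hrep hx
    exact ⟨(o, t), Subtype.ext h⟩
  · rw [Subtype.ext_iff]
    exact (branch_rep_eq_branch_rep_iff hrep).symm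

theorem existsUnique_mem_sheet (hrep : IsDiagonalTransversal rep) (x : puncturedRootVariety s) :
    ∃! o, x ∈ sheet (rep o) := by
  obtain ⟨o, t, h⟩ := exists_branch_rep_eq hrep x.2.1
  refine ⟨o, ⟨t, h⟩, fun o' ⟨t', h'⟩ => ?_⟩
  exact (eq_of_branch_rep_eq hrep (ne_zero_of_branch_eq x.2.2 h') (h'.trans h.symm)).1

theorem exists_mem_sheet_iff (hrep : IsDiagonalTransversal rep) {x y : puncturedRootVariety s}
    (hxy : x.1.2 = y.1.2) :
    (∃ o, x ∈ sheet (rep o) ∧ y ∈ sheet (rep o)) ↔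
      ∃ m : ℤ, ∀ j, y.1.1 j = toCircle (m : ZMod (s j)) * x.1.1 j := by
  constructor
  · rintro ⟨o, ⟨t, hx⟩, ⟨t', hy⟩⟩
    have ht := ne_zero_of_branch_eq x.2.2 hx
    have hN : t ^ lcmDegree s = t' ^ lcmDegree s :=
      (congrArg Prod.snd hx).trans (hxy.trans (congrArg Prod.snd hy).symm)
    obtain ⟨m, rfl⟩ := ZMod.exists_toCircle_mul_eq_of_pow_eq_pow ht hN
    refine ⟨m, fun j => ?_⟩
    rw [← hy, ← hx, branch_toCircle_mul, branch_add_intCast]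
  · rintro ⟨m, hm⟩
    obtain ⟨o, ⟨t, hx⟩, -⟩ := existsUnique_mem_sheet hrep x
    refine ⟨o, ⟨t, hx⟩, toCircle (m : ZMod (lcmDegree s)) * t, ?_⟩
    rw [branch_toCircle_mul, branch_add_intCast, hx]
    exact Prod.ext (funext fun j => (hm j).symm) hxy

end Transversal

theorem exists_isDiagonalTransversal_fin {l : ℕ} (s : Fin l → ℕ) [∀ j, NeZero (s j)] :
    ∃ rep : Fin (diagOrbitCount l s) → ∀ j, ZMod (s j), IsDiagonalTransversal rep := by
  let r := fun e₁ e₂ : ∀ j, ZMod (s j) => ∃ m : ℤ, ∀ j, e₂ j = e₁ j + (m : ZMod (s j))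
  have hr : ∀ e₁ e₂, r e₁ e₂ ↔ ∃ m : ℤ, e₂ = e₁ + m := fun e₁ e₂ => by
    simp only [r, funext_iff, Pi.add_apply, Pi.intCast_apply]
  have hequiv : Equivalence r := by
    refine ⟨fun e => (hr _ _).mpr ⟨0, by simp⟩, fun h => (hr _ _).mpr ?_,
      fun h h' => (hr _ _).mpr ?_⟩
    · obtain ⟨m, rfl⟩ := (hr _ _).mp h
      exact ⟨-m, by push_cast; ring⟩
    · obtain ⟨m, rfl⟩ := (hr _ _).mp h
      obtain ⟨m', rfl⟩ := (hr _ _).mp h'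
      exact ⟨m + m', by push_cast; ring⟩
  let eO : Quot r ≃ Fin (diagOrbitCount l s) := Finite.equivFin _
  refine ⟨fun o => (eO.symm o).out, fun e => ⟨eO (Quot.mk r e), ?_, ?_⟩⟩
  · have hmk : Quot.mk r (eO.symm (eO (Quot.mk r e))).out = Quot.mk r e := by simp
    exact (hr _ _).mp (hequiv.eqvGen_iff.mp (Quot.eqvGen_exact hmk))
  · rintro o ⟨m, rfl⟩
    rw [eq_comm, ← eO.eq_symm_apply, ← Quot.out_eq (eO.symm o)]
    exact (Quot.sound ((hr _ _).mpr ⟨m, rfl⟩)).symm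

end RootFiberProduct

open RootFiberProduct

/-- The number of connected components of `Ξ_{\vec s}` (away from the cone point, i.e.
on the locus `λ ≠ 0`) equals the number of diagonal-translation orbits; two points over
the same `λ ≠ 0` lie in the same connected component iff their tuples of roots differ by
the diagonal action; and `Ξ_{\vec s}` is topologically a wedge of that many copies of `ℂ`
glued at the origin. -/
theorem stmt0 (l : ℕ) (s : Fin l → ℕ) (hs : ∀ j, 0 < s j) :
    Nat.card (ConnectedComponents
        {x : (Fin l → ℂ) × ℂ // (∀ j, x.1 j ^ s j = x.2) ∧ x.2 ≠ 0})
      = diagOrbitCount l s ∧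
    (∀ x y : {x : (Fin l → ℂ) × ℂ // (∀ j, x.1 j ^ s j = x.2) ∧ x.2 ≠ 0},
      x.1.2 = y.1.2 →
      (ConnectedComponents.mk x = ConnectedComponents.mk y ↔
        ∃ m : ℤ, ∀ j, y.1.1 j
          = Complex.exp (2 * (Real.pi : ℂ) * Complex.I * (m : ℂ) / (s j : ℂ)) * x.1.1 j)) ∧
    Nonempty
      ({x : (Fin l → ℂ) × ℂ // ∀ j, x.1 j ^ s j = x.2} ≃ₜ
        Quot (fun p q : Fin (diagOrbitCount l s) × ℂ => p = q ∨ (p.2 = 0 ∧ q.2 = 0))) := by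
  -- the two subtypes above are `puncturedRootVariety s` and `rootVariety s`, unfolded
  have : ∀ j, NeZero (s j) := fun j => ⟨(hs j).ne'⟩
  obtain ⟨rep, hrep⟩ := exists_isDiagonalTransversal_fin s
  have hclosed := fun o => isClosed_sheet (rep o)
  have hconn := fun o => isConnected_sheet (rep o)
  refine ⟨?_, fun x y hxy => ?_, nonempty_homeomorph_wedge hrep⟩
  · exact (natCard_connectedComponents_of_finite_partition hclosed hconn
      (existsUnique_mem_sheet hrep)).trans (Nat.card_fin _)
  · refine (ConnectedComponents.mk_eq_mk_iff_of_finite_partition hclosed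
      (fun o => (hconn o).isPreconnected) (existsUnique_mem_sheet hrep)).trans
      ((exists_mem_sheet_iff hrep hxy).trans ?_)
    simp only [toCircle_intCast]
end

section
/- Newton–Picard iteration (Proposition 5.3.0.1): Let X, Y be Banach spaces, U ⊆ X open, f: U → Y continuously differentiable, x_0 ∈ U with D := df(x_0) surjective with bounded right inverse Q: Y → X, ‖Q‖ ≤ c. Choose δ > 0 with B_δ(x_0) ⊆ U and ‖df(x) − D‖ ≤ 1/(2c) whenever ‖x − x_0‖ < δ. If x_1 ∈ X satisfies ‖f(x_1)‖ < δ/(4c) and ‖x_1 − x_0‖ ≤ δ/8, then there exists a unique x ∈ X with f(x) = 0, x − x_1 ∈ Im(Q), and ‖x − x_0‖ ≤ δ; moreover ‖x − x_1‖ ≤ 2c‖f(x_1)‖. -/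
/-- Quantitative mean value estimate on a closed ball, obtained by extending the
open-ball estimate by continuity. -/
lemma newton_mvt_closedBall {X Y : Type*}
    [NormedAddCommGroup X] [NormedSpace ℝ X]
    [NormedAddCommGroup Y] [NormedSpace ℝ Y]
    (U : Set X) (f : X → Y) (x₀ : X)
    (hf : ∀ x ∈ U, DifferentiableAt ℝ f x)
    (C δ : ℝ) (hC : 0 ≤ C) (hδ : 0 < δ) (hball : Metric.closedBall x₀ δ ⊆ U)
    (hder : ∀ x : X, ‖x - x₀‖ < δ → ‖fderiv ℝ f x - fderiv ℝ f x₀‖ ≤ C)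
    {a b : X} (ha : a ∈ Metric.closedBall x₀ δ) (hb : b ∈ Metric.closedBall x₀ δ) :
    ‖f b - f a - (fderiv ℝ f x₀) (b - a)‖ ≤ C * ‖b - a‖ := by
  set D := fderiv ℝ f x₀ with hD
  -- open-ball version
  have hopen : ∀ a' ∈ Metric.ball x₀ δ, ∀ b' ∈ Metric.ball x₀ δ,
      ‖f b' - f a' - D (b' - a')‖ ≤ C * ‖b' - a'‖ := by
    intro a' ha' b' hb'
    refine (convex_ball x₀ δ).norm_image_sub_le_of_norm_fderiv_le'
      (fun z hz => hf z (hball (Metric.ball_subset_closedBall hz)))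
      (fun z hz => ?_) ha' hb'
    exact hder z (by simpa [dist_eq_norm] using Metric.mem_ball.1 hz)
  -- approximate a, b by points strictly inside
  set t : ℕ → ℝ := fun n => (n : ℝ) / (n + 1) with ht
  have ht0 : ∀ n, 0 ≤ t n := fun n => by positivity
  have ht1 : ∀ n, t n < 1 := fun n => by
    rw [ht]; rw [div_lt_one (by positivity)]; linarith
  have htend : Filter.Tendsto t Filter.atTop (nhds 1) :=
    tendsto_natCast_div_add_atTop (1 : ℝ)
  have hmem : ∀ (z : X), z ∈ Metric.closedBall x₀ δ → ∀ n,
      x₀ + t n • (z - x₀) ∈ Metric.ball x₀ δ := by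
    intro z hz n
    rw [Metric.mem_ball, dist_eq_norm]
    have : ‖x₀ + t n • (z - x₀) - x₀‖ = t n * ‖z - x₀‖ := by
      rw [add_sub_cancel_left, norm_smul, Real.norm_eq_abs, abs_of_nonneg (ht0 n)]
    rw [this]
    have hzn : ‖z - x₀‖ ≤ δ := by
      rw [Metric.mem_closedBall, dist_eq_norm] at hz; exact hz
    calc t n * ‖z - x₀‖ ≤ t n * δ := by
          exact mul_le_mul_of_nonneg_left hzn (ht0 n)
      _ < 1 * δ := by exact mul_lt_mul_of_pos_right (ht1 n) hδ
      _ = δ := one_mul δ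
  set an : ℕ → X := fun n => x₀ + t n • (a - x₀) with han
  set bn : ℕ → X := fun n => x₀ + t n • (b - x₀) with hbn
  have hantend : Filter.Tendsto an Filter.atTop (nhds a) := by
    have : Filter.Tendsto (fun n => x₀ + t n • (a - x₀)) Filter.atTop
        (nhds (x₀ + (1 : ℝ) • (a - x₀))) :=
      Filter.Tendsto.const_add _ (htend.smul_const _)
    simpa using this
  have hbntend : Filter.Tendsto bn Filter.atTop (nhds b) := by
    have : Filter.Tendsto (fun n => x₀ + t n • (b - x₀)) Filter.atTop
        (nhds (x₀ + (1 : ℝ) • (b - x₀))) :=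
      Filter.Tendsto.const_add _ (htend.smul_const _)
    simpa using this
  have hfa : ContinuousAt f a := (hf a (hball ha)).continuousAt
  have hfb : ContinuousAt f b := (hf b (hball hb)).continuousAt
  have hLHS : Filter.Tendsto (fun n => ‖f (bn n) - f (an n) - D (bn n - an n)‖)
      Filter.atTop (nhds ‖f b - f a - D (b - a)‖) := by
    have h1 : Filter.Tendsto (fun n => f (bn n)) Filter.atTop (nhds (f b)) :=
      hfb.tendsto.comp hbntend
    have h2 : Filter.Tendsto (fun n => f (an n)) Filter.atTop (nhds (f a)) :=
      hfa.tendsto.comp hantend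
    have h3 : Filter.Tendsto (fun n => D (bn n - an n)) Filter.atTop (nhds (D (b - a))) :=
      (D.continuous.tendsto _).comp ((hbntend.sub hantend))
    exact ((h1.sub h2).sub h3).norm
  have hRHS : Filter.Tendsto (fun n => C * ‖bn n - an n‖) Filter.atTop
      (nhds (C * ‖b - a‖)) :=
    ((hbntend.sub hantend).norm).const_mul C
  exact le_of_tendsto_of_tendsto' hLHS hRHS
    (fun n => hopen (an n) (hmem a ha n) (bn n) (hmem b hb n))

set_option maxHeartbeats 800000 in
/-- Newton–Picard iteration (Proposition 5.3.0.1 / McDuff–Salamon A.3.4): under the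
stated quantitative hypotheses there is a unique zero `x` of `f` with `x − x₁ ∈ Im Q`
and `‖x − x₀‖ ≤ δ`; moreover `‖x − x₁‖ ≤ 2c‖f(x₁)‖`. -/
theorem stmt18 (X Y : Type*)
    [NormedAddCommGroup X] [NormedSpace ℝ X] [CompleteSpace X]
    [NormedAddCommGroup Y] [NormedSpace ℝ Y]
    (U : Set X) (hU : IsOpen U) (f : X → Y) (x₀ : X) (hx₀ : x₀ ∈ U)
    (hf : ∀ x ∈ U, DifferentiableAt ℝ f x)
    (Q : Y →L[ℝ] X) (hQ : ∀ y, fderiv ℝ f x₀ (Q y) = y)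
    (c δ : ℝ) (hc : 0 < c) (hQc : ‖Q‖ ≤ c)
    (hδ : 0 < δ) (hball : Metric.closedBall x₀ δ ⊆ U)
    (hder : ∀ x : X, ‖x - x₀‖ < δ →
      ‖fderiv ℝ f x - fderiv ℝ f x₀‖ ≤ 1 / (2 * c))
    (x₁ : X) (hfx₁ : ‖f x₁‖ < δ / (4 * c)) (hx₁ : ‖x₁ - x₀‖ ≤ δ / 8) :
    ∃ x : X, (f x = 0 ∧ (∃ y, x - x₁ = Q y) ∧ ‖x - x₀‖ ≤ δ) ∧
      ‖x - x₁‖ ≤ 2 * c * ‖f x₁‖ ∧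
      ∀ x' : X, (f x' = 0 ∧ (∃ y, x' - x₁ = Q y) ∧ ‖x' - x₀‖ ≤ δ) → x' = x := by
  set D := fderiv ℝ f x₀ with hD
  have hC : (0 : ℝ) ≤ 1 / (2 * c) := by positivity
  have key : ∀ a ∈ Metric.closedBall x₀ δ, ∀ b ∈ Metric.closedBall x₀ δ,
      ‖f b - f a - D (b - a)‖ ≤ 1 / (2 * c) * ‖b - a‖ :=
    fun a ha b hb => newton_mvt_closedBall U f x₀ hf _ δ hC hδ hball hder ha hb
  have hF : (0 : ℝ) ≤ ‖f x₁‖ := norm_nonneg _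
  have hQnorm : ∀ y : Y, ‖Q y‖ ≤ c * ‖y‖ := fun y =>
    le_trans (Q.le_opNorm y) (mul_le_mul_of_nonneg_right hQc (norm_nonneg y))
  have hcF : c * ‖f x₁‖ < δ / 4 := by
    have := (mul_lt_mul_of_pos_left hfx₁ hc)
    calc c * ‖f x₁‖ < c * (δ / (4 * c)) := this
      _ = δ / 4 := by field_simp
  -- the Newton iteration
  set seq : ℕ → X := fun n => Nat.rec x₁ (fun _ p => p - Q (f p)) n with hseq
  have hseq0 : seq 0 = x₁ := rfl
  have hseqS : ∀ n, seq (n + 1) = seq n - Q (f (seq n)) := fun n => rfl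
  -- invariants
  have inv : ∀ n, ‖f (seq n)‖ ≤ ‖f x₁‖ / 2 ^ n ∧
      ‖seq n - x₁‖ ≤ (2 - 2 / 2 ^ n) * (c * ‖f x₁‖) := by
    intro n
    induction n with
    | zero => constructor <;> simp [hseq0]
    | succ n ih =>
      obtain ⟨h1, h2⟩ := ih
      have hpow : (0 : ℝ) < 2 ^ n := by positivity
      have hcoef : (2 : ℝ) - 2 / 2 ^ n ≤ 2 := by
        have : (0:ℝ) ≤ 2 / 2^n := by positivity
        linarith
      have hdist : ‖seq n - x₁‖ ≤ 2 * (c * ‖f x₁‖) := by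
        calc ‖seq n - x₁‖ ≤ (2 - 2 / 2 ^ n) * (c * ‖f x₁‖) := h2
          _ ≤ 2 * (c * ‖f x₁‖) := by
            exact mul_le_mul_of_nonneg_right hcoef (by positivity)
      have hmemn : seq n ∈ Metric.closedBall x₀ δ := by
        rw [Metric.mem_closedBall, dist_eq_norm]
        calc ‖seq n - x₀‖ ≤ ‖seq n - x₁‖ + ‖x₁ - x₀‖ := norm_sub_le_norm_sub_add_norm_sub _ _ _
          _ ≤ 2 * (c * ‖f x₁‖) + δ / 8 := add_le_add hdist hx₁
          _ ≤ 2 * (δ / 4) + δ / 8 := by linarith [hcF]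
          _ ≤ δ := by linarith
      have hstep : ‖seq (n + 1) - seq n‖ ≤ c * (‖f x₁‖ / 2 ^ n) := by
        rw [hseqS n]
        have : seq n - Q (f (seq n)) - seq n = -(Q (f (seq n))) := by abel
        rw [this, norm_neg]
        calc ‖Q (f (seq n))‖ ≤ c * ‖f (seq n)‖ := hQnorm _
          _ ≤ c * (‖f x₁‖ / 2 ^ n) := mul_le_mul_of_nonneg_left h1 hc.le
      have h2' : ‖seq (n + 1) - x₁‖ ≤ (2 - 2 / 2 ^ (n + 1)) * (c * ‖f x₁‖) := by
        calc ‖seq (n + 1) - x₁‖ ≤ ‖seq (n + 1) - seq n‖ + ‖seq n - x₁‖ :=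
              norm_sub_le_norm_sub_add_norm_sub _ _ _
          _ ≤ c * (‖f x₁‖ / 2 ^ n) + (2 - 2 / 2 ^ n) * (c * ‖f x₁‖) := add_le_add hstep h2
          _ = (2 - 2 / 2 ^ (n + 1)) * (c * ‖f x₁‖) := by
              rw [pow_succ]; field_simp; ring
      have hcoef' : (2 : ℝ) - 2 / 2 ^ (n+1) ≤ 2 := by
        have : (0:ℝ) ≤ 2 / 2^(n+1) := by positivity
        linarith
      have hmemn1 : seq (n + 1) ∈ Metric.closedBall x₀ δ := by
        rw [Metric.mem_closedBall, dist_eq_norm]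
        calc ‖seq (n+1) - x₀‖ ≤ ‖seq (n+1) - x₁‖ + ‖x₁ - x₀‖ :=
              norm_sub_le_norm_sub_add_norm_sub _ _ _
          _ ≤ 2 * (c * ‖f x₁‖) + δ / 8 := by
              refine add_le_add (le_trans h2' ?_) hx₁
              exact mul_le_mul_of_nonneg_right hcoef' (by positivity)
          _ ≤ 2 * (δ / 4) + δ / 8 := by linarith [hcF]
          _ ≤ δ := by linarith
      refine ⟨?_, h2'⟩
      -- the key decay estimate
      have hDstep : D (seq (n+1) - seq n) = -(f (seq n)) := by
        rw [hseqS n]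
        have : seq n - Q (f (seq n)) - seq n = -(Q (f (seq n))) := by abel
        rw [this, map_neg, hQ]
      have heq : f (seq (n+1)) = f (seq (n+1)) - f (seq n) - D (seq (n+1) - seq n) := by
        rw [hDstep]; abel
      rw [heq]
      calc ‖f (seq (n+1)) - f (seq n) - D (seq (n+1) - seq n)‖
          ≤ 1 / (2 * c) * ‖seq (n+1) - seq n‖ := key _ hmemn _ hmemn1
        _ ≤ 1 / (2 * c) * (c * (‖f x₁‖ / 2 ^ n)) := mul_le_mul_of_nonneg_left hstep hC
        _ = ‖f x₁‖ / 2 ^ (n + 1) := by rw [pow_succ]; field_simp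
  -- Cauchy sequence
  have hcauchy : CauchySeq seq := by
    apply cauchySeq_of_le_geometric (1/2 : ℝ) (c * ‖f x₁‖) (by norm_num)
    intro n
    rw [dist_eq_norm]
    have : ‖seq n - seq (n+1)‖ = ‖seq (n+1) - seq n‖ := norm_sub_rev _ _
    rw [this, hseqS n]
    have h1 := (inv n).1
    have he : seq n - Q (f (seq n)) - seq n = -(Q (f (seq n))) := by abel
    rw [he, norm_neg]
    calc ‖Q (f (seq n))‖ ≤ c * ‖f (seq n)‖ := hQnorm _
      _ ≤ c * (‖f x₁‖ / 2 ^ n) := mul_le_mul_of_nonneg_left h1 hc.le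
      _ = c * ‖f x₁‖ * (1/2) ^ n := by
          rw [div_pow, one_pow]; ring
  obtain ⟨x, hx⟩ := cauchySeq_tendsto_of_complete hcauchy
  -- bound on ‖x - x₁‖
  have htendsub : Filter.Tendsto (fun n => seq n - x₁) Filter.atTop (nhds (x - x₁)) :=
    hx.sub_const x₁
  have hxx₁ : ‖x - x₁‖ ≤ 2 * c * ‖f x₁‖ := by
    refine le_of_tendsto htendsub.norm (Filter.Eventually.of_forall fun n => ?_)
    calc ‖seq n - x₁‖ ≤ (2 - 2 / 2 ^ n) * (c * ‖f x₁‖) := (inv n).2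
      _ ≤ 2 * (c * ‖f x₁‖) := by
          refine mul_le_mul_of_nonneg_right ?_ (by positivity)
          have : (0:ℝ) ≤ 2 / 2^n := by positivity
          linarith
      _ = 2 * c * ‖f x₁‖ := by ring
  -- x is in the closed ball (in fact strictly inside)
  have hxball : ‖x - x₀‖ ≤ δ := by
    calc ‖x - x₀‖ ≤ ‖x - x₁‖ + ‖x₁ - x₀‖ := norm_sub_le_norm_sub_add_norm_sub _ _ _
      _ ≤ 2 * c * ‖f x₁‖ + δ / 8 := add_le_add hxx₁ hx₁
      _ ≤ 2 * (δ / 4) + δ / 8 := by linarith [hcF]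
      _ ≤ δ := by linarith
  have hxmem : x ∈ Metric.closedBall x₀ δ := by
    rw [Metric.mem_closedBall, dist_eq_norm]; exact hxball
  -- f x = 0
  have hfseq0 : Filter.Tendsto (fun n => f (seq n)) Filter.atTop (nhds 0) := by
    apply squeeze_zero_norm (fun n => (inv n).1)
    have : Filter.Tendsto (fun n : ℕ => ‖f x₁‖ * (1/2 : ℝ) ^ n) Filter.atTop (nhds (‖f x₁‖ * 0)) :=
      (tendsto_pow_atTop_nhds_zero_of_lt_one (by norm_num) (by norm_num)).const_mul _
    have heq : (fun n : ℕ => ‖f x₁‖ / 2 ^ n) = fun n : ℕ => ‖f x₁‖ * (1/2 : ℝ) ^ n := by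
      funext n; rw [div_pow, one_pow]; ring
    rw [heq]
    simpa using this
  have hfx : f x = 0 := by
    have hcont : ContinuousAt f x := (hf x (hball hxmem)).continuousAt
    have h1 : Filter.Tendsto (fun n => f (seq n)) Filter.atTop (nhds (f x)) :=
      hcont.tendsto.comp hx
    exact tendsto_nhds_unique h1 hfseq0
  -- x - x₁ ∈ range Q
  have hpartial : ∀ n, seq n - x₁ = -(Q (∑ k ∈ Finset.range n, f (seq k))) := by
    intro n
    induction n with
    | zero => simp [hseq0]
    | succ n ih =>
      rw [hseqS n, Finset.sum_range_succ, map_add]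
      have : seq n - Q (f (seq n)) - x₁ = (seq n - x₁) - Q (f (seq n)) := by abel
      rw [this, ih]; abel
  have hfix : ∀ n, Q (D (seq n - x₁)) = seq n - x₁ := by
    intro n
    rw [hpartial n, map_neg, map_neg, hQ]
  have hxy : x - x₁ = Q (D (x - x₁)) := by
    have h1 : Filter.Tendsto (fun n => Q (D (seq n - x₁))) Filter.atTop
        (nhds (Q (D (x - x₁)))) := by
      exact ((Q.continuous.comp D.continuous).tendsto _).comp htendsub
    have h2 := (Filter.tendsto_congr hfix).1 h1
    exact tendsto_nhds_unique htendsub h2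
  refine ⟨x, ⟨hfx, ⟨_, hxy⟩, hxball⟩, hxx₁, ?_⟩
  -- uniqueness
  rintro x' ⟨hfx', ⟨y', hy'⟩, hx'ball⟩
  have hx'mem : x' ∈ Metric.closedBall x₀ δ := by
    rw [Metric.mem_closedBall, dist_eq_norm]; exact hx'ball
  set y := D (x - x₁) with hy
  have hdiff : x' - x = Q (y' - y) := by
    have : x' - x = (x' - x₁) - (x - x₁) := by abel
    rw [this, hy', hxy, ← map_sub]
  have hDdiff : D (x' - x) = y' - y := by rw [hdiff, hQ]
  have hest : ‖y' - y‖ ≤ 1 / (2 * c) * ‖x' - x‖ := by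
    have := key x hxmem x' hx'mem
    rw [hfx', hfx, hDdiff] at this
    rw [norm_sub_rev]
    simpa using this
  have hest2 : ‖y' - y‖ ≤ 1 / 2 * ‖y' - y‖ := by
    calc ‖y' - y‖ ≤ 1 / (2 * c) * ‖x' - x‖ := hest
      _ ≤ 1 / (2 * c) * (c * ‖y' - y‖) := by
          refine mul_le_mul_of_nonneg_left ?_ hC
          rw [hdiff]; exact hQnorm _
      _ = 1 / 2 * ‖y' - y‖ := by
          have hcne : c ≠ 0 := ne_of_gt hc
          field_simp
  have hzero : ‖y' - y‖ = 0 := by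
    have hn : (0:ℝ) ≤ ‖y' - y‖ := norm_nonneg _
    linarith
  have : x' - x = 0 := by
    rw [hdiff]
    have : y' - y = 0 := by rwa [norm_eq_zero] at hzero
    rw [this, map_zero]
  exact sub_eq_zero.1 this
end
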